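/- There is no orientation of the 4-cube in which exactly 7 vertices have in-degree 0, exactly 2 vertices have in-degree 2, and exactly 7 vertices have in-degree 4 (even though 7 + 2 + 7 = 2^4 and 0·7 + 2·2 + 4·7 = 4·2^3, so the vertex and edge counting conditions are satisfied). -/

import Mathlib

/-- Flip coordinate `i` of a binary `n`-tuple. -/
def flipBit {n : ℕ} (v : Fin n → ZMod 2) (i : Fin n) : Fin n → ZMod 2 :=
  Function.update v i (v i + 1)

/-- An orientation of the `n`-cube: to each edge (a pair of vertices differing in
exactly one coordinate) we assign a head, one of its two endpoints.  The edge at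
vertex `v` in direction `i` joins `v` and `flipBit v i`; `head v i` is the
assigned head of that edge, which must be one of the endpoints and must not
depend on from which endpoint the edge is viewed. -/
structure CubeOrientation (n : ℕ) where
  head : (Fin n → ZMod 2) → Fin n → (Fin n → ZMod 2)
  head_mem : ∀ v i, head v i = v ∨ head v i = flipBit v i
  compatible : ∀ v i, head (flipBit v i) i = head v i

/-- The in-degree of a vertex `v`: the number of edges incident to `v`
whose head is `v`. -/
def CubeOrientation.inDeg {n : ℕ} (o : CubeOrientation n) (v : Fin n → ZMod 2) : ℕ :=
  (Finset.univ.filter fun i : Fin n => o.head v i = v).card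

/-!
Sources and sinks each form an independent set of 7 vertices, and an independent 7-set of the
4-cube lies in a single parity class: a vertex `w` of the set confines its opposite-parity part
to the 4 opposite-parity non-neighbours of `w`, so a mixed set would split as 4 + 3, and the
4-part would then be the non-neighbour set of two distinct vertices. Hence sources and sinks
fill 7 of the 8 vertices of the two opposite parity classes. The remaining vertex `y` of the
sinks' class has at least 3 source neighbours, all pointing into `y`, so `y` has in-degree 3;
but in-degrees 0, 2 and 4 already account for all 16 vertices.
-/

open Finset

section Cube

variable {n : ℕ}

lemma flipBit_eq_add_single (v : Fin n → ZMod 2) (i : Fin n) :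
    flipBit v i = v + Pi.single i 1 := by
  ext j
  by_cases h : j = i
  · subst h; simp [flipBit]
  · simp [flipBit, h]

lemma flipBit_flipBit (v : Fin n → ZMod 2) (i : Fin n) : flipBit (flipBit v i) i = v := by
  ext j
  simp [flipBit_eq_add_single, add_assoc, CharTwo.add_self_eq_zero]

lemma flipBit_ne (v : Fin n → ZMod 2) (i : Fin n) : flipBit v i ≠ v := by
  simp [flipBit_eq_add_single]

lemma flipBit_injective (v : Fin n → ZMod 2) : Function.Injective (flipBit v) := by
  intro i j h
  by_contra hij
  simpa [flipBit_eq_add_single, Pi.single_apply, hij] using congrFun h i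

def parity (v : Fin n → ZMod 2) : ZMod 2 := ∑ i, v i

lemma parity_flipBit (v : Fin n → ZMod 2) (i : Fin n) : parity (flipBit v i) = parity v + 1 := by
  simp [parity, flipBit_eq_add_single, sum_add_distrib]

lemma parity_flipBit_of_ne {v : Fin n → ZMod 2} {c : ZMod 2} (hv : parity v ≠ c) (i : Fin n) :
    parity (flipBit v i) = c := by
  rw [parity_flipBit]; revert hv; generalize parity v = a; revert a c; decide

variable (n) in
def parityClass (c : ZMod 2) : Finset (Fin n → ZMod 2) := {v | parity v = c}

@[simp]
lemma mem_parityClass {v : Fin n → ZMod 2} {c : ZMod 2} : v ∈ parityClass n c ↔ parity v = c := by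
  simp [parityClass]

lemma card_parityClass_four (c : ZMod 2) : #(parityClass 4 c) = 8 := by
  revert c; decide

lemma ne_of_disjoint_subset_parityClass {S T : Finset (Fin 4 → ZMod 2)} {c d : ZMod 2}
    (hST : Disjoint S T) (hS : S ⊆ parityClass 4 c) (hT : T ⊆ parityClass 4 d)
    (hcard : 8 < #S + #T) : c ≠ d := by
  rintro rfl
  have := card_le_card (union_subset hS hT)
  rw [card_union_of_disjoint hST, card_parityClass_four] at this
  omega

lemma card_filter_flipBit_notMem_le {S : Finset (Fin n → ZMod 2)} {c : ZMod 2}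
    {v : Fin n → ZMod 2} (hv : parity v ≠ c) :
    #{i | flipBit v i ∉ S} ≤ #(parityClass n c \ S) :=
  card_le_card_of_injOn (flipBit v)
    (fun i hi => mem_sdiff.mpr ⟨mem_parityClass.mpr (parity_flipBit_of_ne hv i), (mem_filter.mp hi).2⟩)
    (flipBit_injective v).injOn

end Cube

section Independence

variable {n : ℕ}

def IsCubeIndepSet (A : Finset (Fin n → ZMod 2)) : Prop :=
  ∀ v ∈ A, ∀ i, flipBit v i ∉ A

def oppositeNonNeighbors (w : Fin n → ZMod 2) : Finset (Fin n → ZMod 2) :=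
  {u | parity u ≠ parity w ∧ ∀ i, u ≠ flipBit w i}

lemma card_oppositeNonNeighbors_four (w : Fin 4 → ZMod 2) : #(oppositeNonNeighbors w) = 4 := by
  revert w; decide

lemma oppositeNonNeighbors_injective_four :
    Function.Injective (oppositeNonNeighbors (n := 4)) := by
  unfold Function.Injective; decide

lemma parityClass_compl {c d : ZMod 2} (hcd : c ≠ d) : (parityClass n c)ᶜ = parityClass n d := by
  ext v
  simp only [mem_compl, mem_parityClass]
  generalize parity v = a
  revert a c d; decide

namespace IsCubeIndepSet

variable {A : Finset (Fin n → ZMod 2)}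

lemma inter_parityClass_subset (hA : IsCubeIndepSet A) {w : Fin n → ZMod 2} (hw : w ∈ A)
    {c : ZMod 2} (hc : parity w ≠ c) : A ∩ parityClass n c ⊆ oppositeNonNeighbors w := by
  intro u hu
  rw [mem_inter, mem_parityClass] at hu
  simp only [oppositeNonNeighbors, mem_filter, mem_univ, true_and]
  exact ⟨hu.2 ▸ hc.symm, fun i hi => hA w hw i (hi ▸ hu.1)⟩

lemma card_inter_parityClass_le_four {A : Finset (Fin 4 → ZMod 2)} (hA : IsCubeIndepSet A)
    {w : Fin 4 → ZMod 2} (hw : w ∈ A) {c : ZMod 2} (hc : parity w ≠ c) :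
    #(A ∩ parityClass 4 c) ≤ 4 :=
  (card_le_card (hA.inter_parityClass_subset hw hc)).trans_eq (card_oppositeNonNeighbors_four w)

lemma card_inter_parityClass_le_one {A : Finset (Fin 4 → ZMod 2)} (hA : IsCubeIndepSet A)
    {c d : ZMod 2} (hcd : c ≠ d) (h4 : #(A ∩ parityClass 4 c) = 4) :
    #(A ∩ parityClass 4 d) ≤ 1 := by
  have eq_opp : ∀ u ∈ A ∩ parityClass 4 d, A ∩ parityClass 4 c = oppositeNonNeighbors u := by
    intro u hu
    rw [mem_inter, mem_parityClass] at hu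
    exact eq_of_subset_of_card_le (hA.inter_parityClass_subset hu.1 (hu.2 ▸ hcd.symm))
      (by rw [card_oppositeNonNeighbors_four, h4])
  exact card_le_one.mpr fun u hu u' hu' =>
    oppositeNonNeighbors_injective_four ((eq_opp u hu).symm.trans (eq_opp u' hu'))

lemma exists_subset_parityClass {A : Finset (Fin 4 → ZMod 2)} (hA : IsCubeIndepSet A)
    (hcard : #A = 7) : ∃ c, A ⊆ parityClass 4 c := by
  by_contra! hmixed
  have h01 : (0 : ZMod 2) ≠ 1 := by decide
  have hsum : #(A ∩ parityClass 4 0) + #(A ∩ parityClass 4 1) = 7 := by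
    rw [← parityClass_compl h01, ← sdiff_eq_inter_compl, card_inter_add_card_sdiff, hcard]
  have hle : ∀ c, #(A ∩ parityClass 4 c) ≤ 4 := fun c => by
    obtain ⟨w, hw, hwc⟩ := not_subset.mp (hmixed c)
    exact hA.card_inter_parityClass_le_four hw (mem_parityClass.not.mp hwc)
  have h0 := hle 0
  have h1 := hle 1
  have r0 := hA.card_inter_parityClass_le_one h01
  have r1 := hA.card_inter_parityClass_le_one h01.symm
  omega

end IsCubeIndepSet

end Independence

namespace CubeOrientation

variable {n : ℕ} (o : CubeOrientation n)

lemma inDeg_le (v : Fin n → ZMod 2) : o.inDeg v ≤ n :=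
  (card_filter_le _ _).trans_eq (card_fin n)

lemma head_eq_self_of_inDeg_eq {v : Fin n → ZMod 2} (hv : o.inDeg v = n) (i : Fin n) :
    o.head v i = v := by
  have hfull : #{i | o.head v i = v} = #(univ : Finset (Fin n)) := by
    rw [card_univ, Fintype.card_fin]; exact hv
  exact card_filter_eq_iff.mp hfull i (mem_univ i)

lemma head_ne_self_of_inDeg_eq_zero {v : Fin n → ZMod 2} (hv : o.inDeg v = 0) (i : Fin n) :
    o.head v i ≠ v :=
  card_filter_eq_zero_iff.mp hv i (mem_univ i)

lemma head_flipBit_eq_self_iff (v : Fin n → ZMod 2) (i : Fin n) :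
    o.head (flipBit v i) i = flipBit v i ↔ o.head v i ≠ v := by
  rw [o.compatible]
  rcases o.head_mem v i with h | h <;> simp [h, flipBit_ne, (flipBit_ne v i).symm]

lemma isCubeIndepSet_sinks : IsCubeIndepSet ({v | o.inDeg v = n} : Finset (Fin n → ZMod 2)) := by
  intro v hv i hvi
  rw [mem_filter] at hv hvi
  exact (o.head_flipBit_eq_self_iff v i).mp (o.head_eq_self_of_inDeg_eq hvi.2 i)
    (o.head_eq_self_of_inDeg_eq hv.2 i)

lemma isCubeIndepSet_sources : IsCubeIndepSet ({v | o.inDeg v = 0} : Finset (Fin n → ZMod 2)) := by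
  intro v hv i hvi
  rw [mem_filter] at hv hvi
  exact o.head_ne_self_of_inDeg_eq_zero hvi.2 i
    ((o.head_flipBit_eq_self_iff v i).mpr (o.head_ne_self_of_inDeg_eq_zero hv.2 i))

lemma head_eq_self_of_inDeg_flipBit_eq_zero {v : Fin n → ZMod 2} {i : Fin n}
    (hv : o.inDeg (flipBit v i) = 0) : o.head v i = v := by
  simpa [flipBit_flipBit] using
    (o.head_flipBit_eq_self_iff (flipBit v i) i).mpr (o.head_ne_self_of_inDeg_eq_zero hv i)

lemma card_sourceNeighbors_le_inDeg (v : Fin n → ZMod 2) :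
    #{i | o.inDeg (flipBit v i) = 0} ≤ o.inDeg v :=
  card_le_card fun i hi => by
    rw [mem_filter] at hi ⊢
    exact ⟨hi.1, o.head_eq_self_of_inDeg_flipBit_eq_zero hi.2⟩

lemma sub_card_nonSources_le_inDeg {c : ZMod 2} {v : Fin n → ZMod 2} (hv : parity v ≠ c) :
    n - #(parityClass n c \ ({u | o.inDeg u = 0} : Finset _)) ≤ o.inDeg v := by
  have hsplit := card_filter_add_card_filter_not (s := univ) fun i => o.inDeg (flipBit v i) = 0
  have hnon := card_filter_flipBit_notMem_le (S := {u | o.inDeg u = 0}) hv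
  have hsrc := o.card_sourceNeighbors_le_inDeg v
  simp only [mem_filter, mem_univ, true_and, card_univ, Fintype.card_fin] at hsplit hnon
  omega

lemma sum_card_filter_inDeg_eq :
    ∑ k ∈ range (n + 1), #{v | o.inDeg v = k} = 2 ^ n := by
  rw [← card_eq_sum_card_fiberwise fun v _ => mem_range.mpr (Nat.lt_succ_of_le (o.inDeg_le v)),
    card_univ, Fintype.card_fun, ZMod.card, Fintype.card_fin]

end CubeOrientation

theorem no_7_2_7_orientation_of_4cube :
    ¬ ∃ o : CubeOrientation 4,
      ((Finset.univ : Finset (Fin 4 → ZMod 2)).filter fun v => o.inDeg v = 0).card = 7 ∧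
      ((Finset.univ : Finset (Fin 4 → ZMod 2)).filter fun v => o.inDeg v = 2).card = 2 ∧
      ((Finset.univ : Finset (Fin 4 → ZMod 2)).filter fun v => o.inDeg v = 4).card = 7 := by
  rintro ⟨o, h0, h2, h4⟩
  have no_inDeg_three : #{v | o.inDeg v = 3} = 0 := by
    have := o.sum_card_filter_inDeg_eq
    simp only [sum_range_succ, sum_range_zero] at this
    omega
  obtain ⟨c₀, hc₀⟩ := o.isCubeIndepSet_sources.exists_subset_parityClass h0
  obtain ⟨c₄, hc₄⟩ := o.isCubeIndepSet_sinks.exists_subset_parityClass h4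
  have hc : c₀ ≠ c₄ := ne_of_disjoint_subset_parityClass
    (disjoint_filter.mpr fun _ _ h h' => by omega) hc₀ hc₄ (by omega)
  obtain ⟨y, hy, hy_sink⟩ := exists_mem_notMem_of_card_lt_card
    (s := {v | o.inDeg v = 4}) (t := parityClass 4 c₄) (by rw [h4, card_parityClass_four]; omega)
  have three_le : 3 ≤ o.inDeg y := by
    have := o.sub_card_nonSources_le_inDeg (c := c₀) (mem_parityClass.mp hy ▸ hc.symm)
    rwa [card_sdiff_of_subset hc₀, card_parityClass_four, h0] at this
  have hy3 : o.inDeg y = 3 := by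
    have := o.inDeg_le y
    have : o.inDeg y ≠ 4 := fun h => hy_sink (mem_filter.mpr ⟨mem_univ y, h⟩)
    omega
  exact card_ne_zero_of_mem (s := ({v | o.inDeg v = 3} : Finset (Fin 4 → ZMod 2)))
    (by simpa using hy3) no_inDeg_three
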